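/- arXiv:0910.4397 — 6 statements merged into one kernel-verified Lean document; each statement's English description precedes it below -/
import Mathlib

section
/- Let 𝒜 be a finite nonempty set, ℋ a finite set of N pairwise distinct functions from 𝒜 to {−1,+1} with coherence parameter c* < 1, and suppose (𝒜, ℋ) is k-neighborly. Fix h* ∈ ℋ and define the GBS sequence by ℋ_0 = ℋ, A_n any minimizer over A ∈ 𝒜 of |Σ_{h∈ℋ_n} h(A)|, and ℋ_{n+1} = {h ∈ ℋ_n : h(A_n) = h*(A_n)}. Then ℋ_n = {h*} for every n ≥ ⌈log N / log(λ^{−1})⌉, where λ = max{(1+c*)/2, (k+1)/(k+2)}; that is, GBS terminates with the correct hypothesis after at most ⌈log N / log(λ^{−1})⌉ queries. -/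
open scoped Classical

/-- The coherence parameter `c*(𝒜,ℋ)`: the infimum over probability mass functions `P`
on `𝒜` of `max_{h∈ℋ} |Σ_{A∈𝒜} h(A) P(A)|`. -/
noncomputable def coherenceParam {𝒜 : Type*} [Fintype 𝒜] (ℋ : Finset (𝒜 → ℝ)) : ℝ :=
  sInf {c : ℝ | ∃ P : 𝒜 → ℝ, (∀ A, 0 ≤ P A) ∧ (∑ A, P A) = 1 ∧
    ∀ h ∈ ℋ, |∑ A, h A * P A| ≤ c}

/-- Cells `A, A'` are `k`-neighbors: the number of hypotheses `h ∈ ℋ` with `h A ≠ h A'`,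
counting each complementary pair `{h, −h} ⊆ ℋ` only once, is at most `k`. -/
def kNeighbor {𝒜 : Type*} [Fintype 𝒜] (ℋ : Finset (𝒜 → ℝ)) (k : ℕ) (A A' : 𝒜) : Prop :=
  (ℋ.filter fun h => h A ≠ h A' ∧ -h ∈ ℋ).card +
    2 * (ℋ.filter fun h => h A ≠ h A' ∧ -h ∉ ℋ).card ≤ 2 * k

/-- `(𝒜,ℋ)` is `k`-neighborly: the `k`-neighborhood graph on `𝒜` is connected, i.e. every
pair of cells is joined by a sequence of `k`-neighbor steps. -/
def kNeighborly {𝒜 : Type*} [Fintype 𝒜] (ℋ : Finset (𝒜 → ℝ)) (k : ℕ) : Prop :=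
  ∀ A A' : 𝒜, Relation.ReflTransGen (kNeighbor ℋ k) A A'

/-!
Write `W_H(A) = ∑_{h ∈ H} h(A)`. A query at a minimiser `A₀` of `|W_H|` keeps at most
`(|H| + |W_H(A₀)|) / 2` hypotheses, so it suffices that `|W_H(A₀)| ≤ (2λ - 1) |H|` when `|H| ≥ 2`.
If `W_H` has constant sign, averaging against any distribution `P` admissible in the definition
of `c*` gives `|W_H(A₀)| ≤ ∑_A P(A) |W_H(A)| = |∑_{h ∈ H} ∑_A h(A) P(A)| ≤ c* |H|`. Otherwise
`W_H` changes sign along a path of `k`-neighbours, on which it moves by at most `2k` per step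
(complementary pairs inside `H` cancel), so some cell has `|W_H| ≤ k`; two distinct hypotheses
disagree somewhere, so also `|W_H(A₀)| ≤ |H| - 2`, and `min (k, |H| - 2) ≤ k |H| / (k + 2)`.
Hence `|ℋ_n| ≤ max (1, λⁿ N)`, which is at most `1` once `n ≥ log N / log λ⁻¹`.
-/

open Finset
open scoped Pointwise

namespace Finset

theorem two_mul_abs_sum_le_sum_union_neg {G : Type*} [AddGroup G] [DecidableEq G] (s : Finset G)
    (g : G → ℝ) (hg : ∀ x, g (-x) = -g x) :
    2 * |∑ x ∈ s, g x| ≤ ∑ x ∈ s ∪ -s, |g x| := by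
  have hneg : ∑ x ∈ -s, g x = -∑ x ∈ s, g x := by
    simp only [sum_neg_index, hg, sum_neg_distrib]
  have hdisj : Disjoint (s \ -s) (-s \ s) := disjoint_sdiff_sdiff
  calc 2 * |∑ x ∈ s, g x| = |∑ x ∈ s, g x - ∑ x ∈ -s, g x| := by
        rw [hneg, sub_neg_eq_add, ← two_mul, abs_mul, abs_two]
    _ = |∑ x ∈ s \ -s, g x - ∑ x ∈ -s \ s, g x| := by
        rw [← sum_inter_add_sum_sdiff s (-s), ← sum_inter_add_sum_sdiff (-s) s, inter_comm]
        ring_nf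
    _ ≤ ∑ x ∈ s \ -s, |g x| + ∑ x ∈ -s \ s, |g x| :=
        (abs_sub _ _).trans (add_le_add (abs_sum_le_sum_abs _ _) (abs_sum_le_sum_abs _ _))
    _ = ∑ x ∈ (s \ -s) ∪ (-s \ s), |g x| := (sum_union hdisj).symm
    _ ≤ ∑ x ∈ s ∪ -s, |g x| :=
        sum_le_sum_of_subset_of_nonneg
          (union_subset_union sdiff_subset sdiff_subset) fun _ _ _ => abs_nonneg _

theorem card_filter_union_neg {G : Type*} [AddGroup G] [DecidableEq G] (s : Finset G)
    (p : G → Prop) [DecidablePred p] (hp : ∀ x, p (-x) ↔ p x) :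
    #((s ∪ -s).filter p) =
      #(s.filter fun x => p x ∧ -x ∈ s) + 2 * #(s.filter fun x => p x ∧ -x ∉ s) := by
  have hneg : (-s).filter p = -(s.filter p) := by
    ext x; simp [mem_neg', hp]
  have hinter : s.filter p ∩ -(s.filter p) = s.filter fun x => p x ∧ -x ∈ s := by
    ext x; simp only [mem_inter, mem_filter, mem_neg', hp]; tauto
  have hsplit := card_filter_add_card_filter_not (s := s.filter p) (fun x => -x ∈ s)
  have := card_union_add_card_inter (s.filter p) (-(s.filter p))
  rw [filter_union, hneg]
  simp only [filter_filter] at hsplit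
  rw [card_neg, hinter] at this
  omega

end Finset

theorem exists_abs_le_of_reflTransGen {α : Type*} {r : α → α → Prop} (f : α → ℝ) {c : ℝ}
    (hc : 0 ≤ c) (hr : ∀ a b, r a b → |f a - f b| ≤ 2 * c) {a b : α}
    (hab : Relation.ReflTransGen r a b) (ha : f a ≤ 0) (hb : 0 ≤ f b) : ∃ x, |f x| ≤ c := by
  induction hab with
  | refl => exact ⟨a, by rw [le_antisymm ha hb, abs_zero]; exact hc⟩
  | @tail b b' _ hbb' ih =>
    rcases le_or_gt 0 (f b) with hb0 | hb0
    · exact ih hb0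
    rcases le_or_gt (f b') c with hb'c | hb'c
    · exact ⟨b', by rwa [abs_of_nonneg hb]⟩
    · have := (abs_le.mp (hr b b' hbb')).1
      exact ⟨b, by rw [abs_of_neg hb0]; linarith⟩

theorem two_mul_card_filter_le {𝒜 : Type*} {H : Finset (𝒜 → ℝ)}
    (hpm : ∀ h ∈ H, ∀ A, h A = 1 ∨ h A = -1) (A : 𝒜) {c : ℝ} (hc : c = 1 ∨ c = -1) :
    2 * #(H.filter fun h => h A = c) ≤ #H + |∑ h ∈ H, h A| := by
  have hpoint : ∀ h ∈ H, 2 * (if h A = c then 1 else 0) ≤ 1 + c * h A := by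
    intro h hh
    rcases hc with rfl | rfl <;> rcases hpm h hh A with e | e <;> norm_num [e]
  calc (2 * #(H.filter fun h => h A = c) : ℝ) = ∑ h ∈ H, 2 * (if h A = c then 1 else 0) := by
        rw [← mul_sum, natCast_card_filter]
    _ ≤ ∑ h ∈ H, (1 + c * h A) := sum_le_sum hpoint
    _ = #H + c * ∑ h ∈ H, h A := by rw [sum_add_distrib, mul_sum, sum_const, nsmul_one]
    _ ≤ #H + |∑ h ∈ H, h A| := by
        rcases hc with rfl | rfl
        · linarith [le_abs_self (∑ h ∈ H, h A)]
        · linarith [neg_abs_le (∑ h ∈ H, h A)]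

theorem le_max_one_pow_mul {u : ℕ → ℝ} {r : ℝ} (hr₀ : 0 ≤ r) (hr₁ : r ≤ 1)
    (hu : ∀ m, u (m + 1) ≤ max 1 (r * u m)) (n : ℕ) : u n ≤ max 1 (r ^ n * u 0) := by
  induction n with
  | zero => simp
  | succ m ih =>
    refine (hu m).trans (max_le (le_max_left _ _) ?_)
    calc r * u m ≤ r * max 1 (r ^ m * u 0) := mul_le_mul_of_nonneg_left ih hr₀
      _ = max r (r ^ (m + 1) * u 0) := by rw [mul_max_of_nonneg _ _ hr₀, pow_succ']; ring_nf
      _ ≤ max 1 (r ^ (m + 1) * u 0) := max_le_max_right _ hr₁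

theorem pow_mul_le_one_of_ceil_log_div_le {r x : ℝ} (hr₀ : 0 < r) (hr₁ : r < 1) (hx : 0 < x)
    {n : ℕ} (hn : ⌈Real.log x / Real.log r⁻¹⌉₊ ≤ n) : r ^ n * x ≤ 1 := by
  have hlog : 0 < Real.log r⁻¹ := Real.log_pos ((one_lt_inv₀ hr₀).2 hr₁)
  have : Real.log x ≤ Real.log (r⁻¹ ^ n) := by
    rw [Real.log_pow, ← div_le_iff₀ hlog]
    exact (Nat.le_ceil _).trans (by exact_mod_cast hn)
  have hxr : x ≤ r⁻¹ ^ n := (Real.log_le_log_iff hx (by positivity)).mp this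
  calc r ^ n * x ≤ r ^ n * r⁻¹ ^ n := mul_le_mul_of_nonneg_left hxr (by positivity)
    _ = 1 := by rw [← mul_pow, mul_inv_cancel₀ hr₀.ne', one_pow]

section GBS

variable {𝒜 : Type*} [Fintype 𝒜]

theorem abs_sum_sub_sum_le_of_kNeighbor {ℋ H : Finset (𝒜 → ℝ)} (hsub : H ⊆ ℋ)
    (hpm : ∀ h ∈ ℋ, ∀ A, h A = 1 ∨ h A = -1) {k : ℕ} {A A' : 𝒜} (hAA' : kNeighbor ℋ k A A') :
    |∑ h ∈ H, h A - ∑ h ∈ H, h A'| ≤ 2 * k := by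
  have hbound : ∀ h ∈ ℋ ∪ -ℋ, ∀ B, |h B| ≤ 1 := by
    intro h hh B
    rcases mem_union.mp hh with hh | hh
    · rcases hpm h hh B with e | e <;> simp [e]
    · rcases hpm (-h) (mem_neg'.mp hh) B with e | e <;>
        simp only [Pi.neg_apply, neg_eq_iff_eq_neg] at e <;> simp [e]
  have hterm : ∀ h ∈ ℋ ∪ -ℋ, |h A - h A'| ≤ if h A ≠ h A' then 2 else 0 := by
    intro h hh
    split_ifs with hne
    · linarith [abs_sub (h A) (h A'), hbound h hh A, hbound h hh A']
    · simp [not_not.mp hne]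
  have hcount := card_filter_union_neg ℋ (fun h : 𝒜 → ℝ => h A ≠ h A')
    (fun h => by simp only [Pi.neg_apply, ne_eq, neg_inj])
  have hk : (#((ℋ ∪ -ℋ).filter fun h => h A ≠ h A') : ℝ) ≤ 2 * k := by
    rw [hcount]
    unfold kNeighbor at hAA'
    exact_mod_cast hAA'
  have hdouble := calc 2 * |∑ h ∈ H, h A - ∑ h ∈ H, h A'|
      = 2 * |∑ h ∈ H, (h A - h A')| := by rw [sum_sub_distrib]
    _ ≤ ∑ h ∈ H ∪ -H, |h A - h A'| :=
        two_mul_abs_sum_le_sum_union_neg H _ fun h => by simp only [Pi.neg_apply]; ring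
    _ ≤ ∑ h ∈ ℋ ∪ -ℋ, |h A - h A'| :=
        sum_le_sum_of_subset_of_nonneg
          (union_subset_union hsub (neg_subset_neg hsub)) fun _ _ _ => abs_nonneg _
    _ ≤ ∑ h ∈ ℋ ∪ -ℋ, if h A ≠ h A' then (2 : ℝ) else 0 := sum_le_sum hterm
    _ = 2 * #((ℋ ∪ -ℋ).filter fun h => h A ≠ h A') := by
        rw [← sum_filter, sum_const, nsmul_eq_mul, mul_comm]
    _ ≤ 2 * (2 * k) := by linarith
  linarith

theorem exists_abs_sum_le_of_kNeighborly {ℋ H : Finset (𝒜 → ℝ)} (hsub : H ⊆ ℋ)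
    (hpm : ∀ h ∈ ℋ, ∀ A, h A = 1 ∨ h A = -1) {k : ℕ} (hnbly : kNeighborly ℋ k) {A A' : 𝒜}
    (hA : ∑ h ∈ H, h A ≤ 0) (hA' : 0 ≤ ∑ h ∈ H, h A') : ∃ B, |∑ h ∈ H, h B| ≤ k :=
  exists_abs_le_of_reflTransGen (fun B => ∑ h ∈ H, h B) k.cast_nonneg
    (fun _ _ hB => abs_sum_sub_sum_le_of_kNeighbor hsub hpm hB) (hnbly A A') hA hA'

theorem exists_abs_sum_add_two_le_card {H : Finset (𝒜 → ℝ)}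
    (hpm : ∀ h ∈ H, ∀ A, h A = 1 ∨ h A = -1) (hH : 2 ≤ #H) :
    ∃ A, |∑ h ∈ H, h A| + 2 ≤ #H := by
  obtain ⟨h₁, h₁H, h₂, h₂H, hne⟩ := one_lt_card.mp hH
  obtain ⟨A, hA⟩ := Function.ne_iff.mp hne
  have h₂H' : h₂ ∈ H.erase h₁ := mem_erase.mpr ⟨hne.symm, h₂H⟩
  have hcancel : h₁ A + h₂ A = 0 := by
    rcases hpm h₁ h₁H A with e₁ | e₁ <;> rcases hpm h₂ h₂H A with e₂ | e₂ <;>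
      simp_all
  have hrest : |∑ h ∈ (H.erase h₁).erase h₂, h A| ≤ #((H.erase h₁).erase h₂) := by
    refine (abs_sum_le_sum_abs _ _).trans ?_
    rw [← nsmul_one, ← sum_const]
    refine sum_le_sum fun h hh => ?_
    rcases hpm h (mem_of_mem_erase (mem_of_mem_erase hh)) A with e | e <;> simp [e]
  have hcard : #((H.erase h₁).erase h₂) + 2 = #H := by
    rw [card_erase_of_mem h₂H', card_erase_of_mem h₁H]
    omega
  refine ⟨A, ?_⟩
  rw [← add_sum_erase _ _ h₁H, ← add_sum_erase _ _ h₂H', ← add_assoc, hcancel, zero_add, ← hcard]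
  push_cast
  linarith

theorem le_coherenceParam [Nonempty 𝒜] {ℋ : Finset (𝒜 → ℝ)} {x : ℝ}
    (hx : ∀ (P : 𝒜 → ℝ) (c : ℝ), (∀ A, 0 ≤ P A) → ∑ A, P A = 1 →
      (∀ h ∈ ℋ, |∑ A, h A * P A| ≤ c) → x ≤ c) :
    x ≤ coherenceParam ℋ := by
  obtain ⟨a⟩ := ‹Nonempty 𝒜›
  refine le_csInf ⟨∑ h ∈ ℋ, |h a|, fun A => if A = a then 1 else 0, ?_, ?_, ?_⟩ ?_
  · exact fun A => by positivity
  · simp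
  · intro h hh
    simpa using single_le_sum (f := fun h : 𝒜 → ℝ => |h a|) (fun _ _ => abs_nonneg _) hh
  · rintro c ⟨P, hP0, hP1, hPc⟩
    exact hx P c hP0 hP1 hPc

theorem abs_sum_le_coherenceParam_mul_card [Nonempty 𝒜] {ℋ H : Finset (𝒜 → ℝ)} (hsub : H ⊆ ℋ)
    {A₀ : 𝒜} (hmin : ∀ A, |∑ h ∈ H, h A₀| ≤ |∑ h ∈ H, h A|)
    (hsign : (∀ A, 0 ≤ ∑ h ∈ H, h A) ∨ (∀ A, ∑ h ∈ H, h A ≤ 0)) :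
    |∑ h ∈ H, h A₀| ≤ coherenceParam ℋ * #H := by
  rcases H.eq_empty_or_nonempty with rfl | hH
  · simp
  rw [← div_le_iff₀ (by exact_mod_cast hH.card_pos)]
  refine le_coherenceParam fun P c hP0 hP1 hPc => ?_
  rw [div_le_iff₀ (by exact_mod_cast hH.card_pos)]
  have habs : ∑ A, P A * |∑ h ∈ H, h A| = |∑ A, P A * ∑ h ∈ H, h A| := by
    rcases hsign with hpos | hneg
    · rw [abs_of_nonneg (sum_nonneg fun A _ => mul_nonneg (hP0 A) (hpos A))]
      simp only [abs_of_nonneg (hpos _)]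
    · rw [abs_of_nonpos (sum_nonpos fun A _ => mul_nonpos_of_nonneg_of_nonpos (hP0 A) (hneg A)),
        ← sum_neg_distrib]
      simp only [abs_of_nonpos (hneg _), mul_neg]
  calc |∑ h ∈ H, h A₀| = ∑ A, P A * |∑ h ∈ H, h A₀| := by rw [← sum_mul, hP1, one_mul]
    _ ≤ ∑ A, P A * |∑ h ∈ H, h A| :=
        sum_le_sum fun A _ => mul_le_mul_of_nonneg_left (hmin A) (hP0 A)
    _ = |∑ h ∈ H, ∑ A, h A * P A| := by
        rw [habs, sum_comm]; simp only [mul_sum, mul_comm]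
    _ ≤ ∑ h ∈ H, |∑ A, h A * P A| := abs_sum_le_sum_abs _ _
    _ ≤ ∑ _h ∈ H, c := sum_le_sum fun h hh => hPc h (hsub hh)
    _ = c * #H := by rw [sum_const, nsmul_eq_mul, mul_comm]

theorem abs_sum_le_max_mul_card [Nonempty 𝒜] {ℋ H : Finset (𝒜 → ℝ)} (hsub : H ⊆ ℋ)
    (hpm : ∀ h ∈ ℋ, ∀ A, h A = 1 ∨ h A = -1) {k : ℕ} (hnbly : kNeighborly ℋ k)
    {A₀ : 𝒜} (hmin : ∀ A, |∑ h ∈ H, h A₀| ≤ |∑ h ∈ H, h A|) (hH : 2 ≤ #H) :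
    |∑ h ∈ H, h A₀| ≤ max (coherenceParam ℋ) (k / (k + 2)) * #H := by
  by_cases hsign : (∀ A, 0 ≤ ∑ h ∈ H, h A) ∨ (∀ A, ∑ h ∈ H, h A ≤ 0)
  · exact (abs_sum_le_coherenceParam_mul_card hsub hmin hsign).trans
      (mul_le_mul_of_nonneg_right (le_max_left _ _) (Nat.cast_nonneg _))
  push Not at hsign
  obtain ⟨⟨A, hA⟩, A', hA'⟩ := hsign
  obtain ⟨B, hB⟩ := exists_abs_sum_le_of_kNeighborly hsub hpm hnbly hA.le hA'.le
  obtain ⟨C, hC⟩ := exists_abs_sum_add_two_le_card (fun h hh => hpm h (hsub hh)) hH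
  have hk : |∑ h ∈ H, h A₀| ≤ k := (hmin B).trans hB
  have hcard : |∑ h ∈ H, h A₀| + 2 ≤ #H := by linarith [hmin C]
  have hsmall : |∑ h ∈ H, h A₀| ≤ k / (k + 2) * #H := by
    rw [div_mul_eq_mul_div, le_div_iff₀ (by positivity)]
    nlinarith [k.cast_nonneg (α := ℝ)]
  exact hsmall.trans (mul_le_mul_of_nonneg_right (le_max_right _ _) (Nat.cast_nonneg _))

/-- The contraction factor `λ` of the query complexity bound. -/
noncomputable def gbsRate (ℋ : Finset (𝒜 → ℝ)) (k : ℕ) : ℝ :=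
  max ((1 + coherenceParam ℋ) / 2) (((k : ℝ) + 1) / ((k : ℝ) + 2))

theorem two_mul_gbsRate_sub_one (ℋ : Finset (𝒜 → ℝ)) (k : ℕ) :
    2 * gbsRate ℋ k - 1 = max (coherenceParam ℋ) (k / (k + 2)) := by
  have : ((k : ℝ) + 1) / (k + 2) = (1 + k / (k + 2)) / 2 := by field_simp; ring
  rw [gbsRate, this, max_div_div_right zero_le_two, max_add_add_left]
  ring

theorem gbsRate_pos (ℋ : Finset (𝒜 → ℝ)) (k : ℕ) : 0 < gbsRate ℋ k :=
  lt_max_of_lt_right (by positivity)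

theorem gbsRate_lt_one {ℋ : Finset (𝒜 → ℝ)} (hcs : coherenceParam ℋ < 1) (k : ℕ) :
    gbsRate ℋ k < 1 :=
  max_lt (by linarith) ((div_lt_one (by positivity)).mpr (by linarith))

theorem card_filter_le_max_one_gbsRate_mul [Nonempty 𝒜] {ℋ H : Finset (𝒜 → ℝ)} (hsub : H ⊆ ℋ)
    (hpm : ∀ h ∈ ℋ, ∀ A, h A = 1 ∨ h A = -1) {k : ℕ} (hnbly : kNeighborly ℋ k)
    {A₀ : 𝒜} (hmin : ∀ A, |∑ h ∈ H, h A₀| ≤ |∑ h ∈ H, h A|) {c : ℝ} (hc : c = 1 ∨ c = -1) :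
    (#(H.filter fun h => h A₀ = c) : ℝ) ≤ max 1 (gbsRate ℋ k * #H) := by
  rcases lt_or_ge #H 2 with hH | hH
  · exact le_max_of_le_left (by exact_mod_cast (card_filter_le _ _).trans (Nat.le_of_lt_succ hH))
  refine le_max_of_le_right ?_
  have hsplit := two_mul_card_filter_le (fun h hh => hpm h (hsub hh)) A₀ hc
  have hkey := abs_sum_le_max_mul_card hsub hpm hnbly hmin hH
  rw [← two_mul_gbsRate_sub_one] at hkey
  linarith

end GBS

/-- Theorem 1, termination form: the GBS sequence satisfies `ℋ_n = {h*}`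
for every `n ≥ ⌈log N / log(λ⁻¹)⌉`, where `λ = max{(1+c*)/2, (k+1)/(k+2)}`. -/
theorem stmt2 {𝒜 : Type*} [Fintype 𝒜] [Nonempty 𝒜] (ℋ : Finset (𝒜 → ℝ))
    (hpm : ∀ h ∈ ℋ, ∀ A, h A = 1 ∨ h A = -1)
    (N : ℕ) (hN : ℋ.card = N)
    (k : ℕ) (hnbly : kNeighborly ℋ k)
    (hcs : coherenceParam ℋ < 1)
    (hstar : 𝒜 → ℝ) (hstarmem : hstar ∈ ℋ)
    (Hseq : ℕ → Finset (𝒜 → ℝ)) (Aseq : ℕ → 𝒜)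
    (hinit : Hseq 0 = ℋ)
    (hmin : ∀ n, ∀ A : 𝒜, |∑ h ∈ Hseq n, h (Aseq n)| ≤ |∑ h ∈ Hseq n, h A|)
    (hstep : ∀ n, Hseq (n + 1) = (Hseq n).filter fun h => h (Aseq n) = hstar (Aseq n)) :
    ∀ n : ℕ,
      ⌈Real.log N / Real.log
          ((max ((1 + coherenceParam ℋ) / 2) (((k : ℝ) + 1) / ((k : ℝ) + 2)))⁻¹)⌉₊ ≤ n →
      Hseq n = {hstar} := by
  intro n hn
  have hsub : ∀ m, Hseq m ⊆ ℋ := fun m => by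
    induction m with
    | zero => rw [hinit]
    | succ m ih => rw [hstep m]; exact (filter_subset _ _).trans ih
  have hmem : ∀ m, hstar ∈ Hseq m := fun m => by
    induction m with
    | zero => rwa [hinit]
    | succ m ih => rw [hstep m]; exact mem_filter.mpr ⟨ih, rfl⟩
  have hcard : (#(Hseq n) : ℝ) ≤ max 1 (gbsRate ℋ k ^ n * N) := by
    have := le_max_one_pow_mul (u := fun m => (#(Hseq m) : ℝ)) (gbsRate_pos ℋ k).le
      (gbsRate_lt_one hcs k).le (fun m => ?_) n
    · rwa [hinit, hN] at this
    rw [hstep m]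
    exact card_filter_le_max_one_gbsRate_mul (hsub m) hpm hnbly (hmin m) (hpm _ hstarmem _)
  have hN0 : (0 : ℝ) < N := by exact_mod_cast hN ▸ card_pos.mpr ⟨hstar, hstarmem⟩
  have hone : #(Hseq n) ≤ 1 := by
    exact_mod_cast hcard.trans (max_le le_rfl
      (pow_mul_le_one_of_ceil_log_div_le (gbsRate_pos ℋ k) (gbsRate_lt_one hcs k) hN0 hn))
  exact eq_singleton_iff_unique_mem.mpr
    ⟨hmem n, fun h hh => card_le_one.mp hone h hh hstar (hmem n)⟩
end

section
/- Let ℋ be a finite set, h* ∈ ℋ, and p a probability mass function on ℋ with p(h*) > 0. Let A be a cell and h(A) ∈ {−1,+1} the value each h ∈ ℋ takes on A; set s = h*(A). Let y be a {−1,+1}-valued random variable with q := P(y ≠ s) satisfying q ≤ α ≤ β < 1/2 for constants α, β with β > 0. Define the Bayes update p'(h) = p(h)·β^{(1−h(A)y)/2}(1−β)^{(1+h(A)y)/2} / Z, where Z is the normalizing constant making p' a probability mass function. Define C(p) = (1 − p(h*))/p(h*). Then E_y[C(p')] ≤ C(p); that is, the sequence C_n is a nonnegative supermartingale under the soft-decision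 GBS update whenever β ≥ α. -/
/-!
At `x = h(A) y ∈ {±1}` the likelihood factor `β ^ ((1 - x) / 2) * (1 - β) ^ ((1 + x) / 2)` equals
the affine function `1/2 + (1/2 - β) x`, so the normalizer of the update is
`Z_y = 1/2 + (1/2 - β) m y` with `m = ∑ p(h) h(A)`, and `C(p'_y) = Z_y / (w p(h*)) - 1` with
`w = 1 - β` if `y = h*(A)` and `w = β` otherwise. The claim thus reduces to
`(1 - q) Z_s / (1 - β) + q Z_{-s} / β ≤ 1`, which is affine in `t = m s ∈ [-1, 1]`, an equality at
`t = 1`, and has defect `(1 - t)(β - q)(1 - 2β) / (2β(1 - β)) ≥ 0`.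
-/

open Finset

lemma rpow_mul_one_sub_rpow_of_sign {β x : ℝ} (hx : x = 1 ∨ x = -1) :
    β ^ ((1 - x) / 2) * (1 - β) ^ ((1 + x) / 2) = 1 / 2 + (1 / 2 - β) * x := by
  rcases hx with rfl | rfl
  · norm_num; ring
  · norm_num

lemma mul_eq_one_or_neg_one {x y : ℝ} (hx : x = 1 ∨ x = -1) (hy : y = 1 ∨ y = -1) :
    x * y = 1 ∨ x * y = -1 := by
  rcases hx with rfl | rfl <;> rcases hy with rfl | rfl <;> norm_num

lemma sum_mul_rpow_mul_rpow_of_sign {ι : Type*} (s : Finset ι) {p v : ι → ℝ} (β : ℝ)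
    (hp1 : ∑ i ∈ s, p i = 1) (hv : ∀ i, v i = 1 ∨ v i = -1) {y : ℝ} (hy : y = 1 ∨ y = -1) :
    ∑ i ∈ s, p i * β ^ ((1 - v i * y) / 2) * (1 - β) ^ ((1 + v i * y) / 2) =
      1 / 2 + (1 / 2 - β) * ((∑ i ∈ s, p i * v i) * y) := by
  have expand : ∀ i, p i * (1 / 2 + (1 / 2 - β) * (v i * y)) =
      1 / 2 * p i + (1 / 2 - β) * y * (p i * v i) := fun i => by ring
  simp_rw [mul_assoc, rpow_mul_one_sub_rpow_of_sign (mul_eq_one_or_neg_one (hv _) hy), expand,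
    sum_add_distrib, ← mul_sum, hp1]
  ring

lemma div_sum_mul_rpow_mul_rpow_of_sign {ι : Type*} (s : Finset ι) {p v : ι → ℝ} (β : ℝ)
    (hp1 : ∑ i ∈ s, p i = 1) (hv : ∀ i, v i = 1 ∨ v i = -1) {y : ℝ} (hy : y = 1 ∨ y = -1) (j : ι) :
    p j * β ^ ((1 - v j * y) / 2) * (1 - β) ^ ((1 + v j * y) / 2) /
        ∑ i ∈ s, p i * β ^ ((1 - v i * y) / 2) * (1 - β) ^ ((1 + v i * y) / 2) =
      p j * (1 / 2 + (1 / 2 - β) * (v j * y)) /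
        (1 / 2 + (1 / 2 - β) * ((∑ i ∈ s, p i * v i) * y)) := by
  rw [mul_assoc, rpow_mul_one_sub_rpow_of_sign (mul_eq_one_or_neg_one (hv j) hy),
    sum_mul_rpow_mul_rpow_of_sign _ β hp1 hv hy]

lemma abs_sum_mul_sign_le_one {ι : Type*} (s : Finset ι) {p v : ι → ℝ} (hp0 : ∀ i, 0 ≤ p i)
    (hp1 : ∑ i ∈ s, p i = 1) (hv : ∀ i, v i = 1 ∨ v i = -1) : |∑ i ∈ s, p i * v i| ≤ 1 := by
  calc |∑ i ∈ s, p i * v i| ≤ ∑ i ∈ s, |p i * v i| := abs_sum_le_sum_abs _ _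
    _ = ∑ i ∈ s, p i := by
      refine sum_congr rfl fun i _ => ?_
      rcases hv i with h | h <;> simp [h, abs_of_nonneg (hp0 i)]
    _ = 1 := hp1

lemma expected_likelihood_ratio_le_one {q β t : ℝ} (hqβ : q ≤ β) (hβ0 : 0 < β) (hβ : β < 1 / 2)
    (ht : |t| ≤ 1) :
    (1 - q) * ((1 / 2 + (1 / 2 - β) * t) / (1 - β)) + q * ((1 / 2 - (1 / 2 - β) * t) / β) ≤ 1 := by
  have h1β : 0 < 1 - β := by linarith
  have gap : 1 - ((1 - q) * ((1 / 2 + (1 / 2 - β) * t) / (1 - β)) +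
      q * ((1 / 2 - (1 / 2 - β) * t) / β)) =
      (1 - t) * (β - q) * (1 - 2 * β) / (2 * β * (1 - β)) := by
    field_simp
    ring
  have : 0 ≤ (1 - t) * (β - q) * (1 - 2 * β) / (2 * β * (1 - β)) := by
    have ht1 : t ≤ 1 := (abs_le.mp ht).2
    apply div_nonneg <;> apply_rules [mul_nonneg] <;> linarith
  linarith

lemma expected_odds_le {P X Y q : ℝ} (hP : 0 < P) (hX : X ≠ 0) (hY : Y ≠ 0)
    (h : (1 - q) * X + q * Y ≤ 1) :
    (1 - q) * ((1 - P / X) / (P / X)) + q * ((1 - P / Y) / (P / Y)) ≤ (1 - P) / P := by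
  have odds : ∀ Z : ℝ, Z ≠ 0 → (1 - P / Z) / (P / Z) = Z / P - 1 := fun Z hZ => by
    field_simp
  rw [odds X hX, odds Y hY, sub_div, div_self hP.ne']
  calc (1 - q) * (X / P - 1) + q * (Y / P - 1) = ((1 - q) * X + q * Y) / P - 1 := by ring
    _ ≤ 1 / P - 1 := by gcongr

theorem stmt6_general {H : Type*} [Fintype H] (hstar : H)
    (p : H → ℝ) (hp0 : ∀ h, 0 ≤ p h) (hp1 : ∑ h, p h = 1) (hps : 0 < p hstar)
    (v : H → ℝ) (hv : ∀ h, v h = 1 ∨ v h = -1)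
    (α β q : ℝ) (hqα : q ≤ α) (hαβ : α ≤ β) (hβ0 : 0 < β) (hβ : β < 1 / 2)
    (p' : ℝ → H → ℝ)
    (hp' : ∀ y h, p' y h =
      p h * β ^ ((1 - v h * y) / 2) * (1 - β) ^ ((1 + v h * y) / 2) /
        ∑ h', p h' * β ^ ((1 - v h' * y) / 2) * (1 - β) ^ ((1 + v h' * y) / 2)) :
    (1 - q) * ((1 - p' (v hstar) hstar) / p' (v hstar) hstar) +
      q * ((1 - p' (-v hstar) hstar) / p' (-v hstar) hstar) ≤
      (1 - p hstar) / p hstar := by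
  have hs := hv hstar
  have hs' : -v hstar = 1 ∨ -v hstar = -1 := by rcases hs with h | h <;> simp [h]
  have hss : v hstar * v hstar = 1 := by rcases hs with h | h <;> simp [h]
  set t := (∑ h, p h * v h) * v hstar
  have ht : |t| ≤ 1 := by
    rcases hs with h | h <;> simpa [t, h] using abs_sum_mul_sign_le_one _ hp0 hp1 hv
  obtain ⟨ht₁, ht₂⟩ := abs_le.mp ht
  have hZpos : 0 < 1 / 2 + (1 / 2 - β) * t := by nlinarith
  have hZneg : 0 < 1 / 2 - (1 / 2 - β) * t := by nlinarith
  have hpos : p' (v hstar) hstar = p hstar / ((1 / 2 + (1 / 2 - β) * t) / (1 - β)) := by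
    rw [hp', div_sum_mul_rpow_mul_rpow_of_sign _ β hp1 hv hs, hss, div_div_eq_mul_div]
    ring
  have hneg : p' (-v hstar) hstar = p hstar / ((1 / 2 - (1 / 2 - β) * t) / β) := by
    rw [hp', div_sum_mul_rpow_mul_rpow_of_sign _ β hp1 hv hs', mul_neg, hss, div_div_eq_mul_div]
    ring
  rw [hpos, hneg]
  exact expected_odds_le hps (div_pos hZpos (by linarith)).ne' (div_pos hZneg hβ0).ne'
    (expected_likelihood_ratio_le_one (hqα.trans hαβ) hβ0 hβ ht)

/-- Lemma: one-step supermartingale property of SGBS. `ℋ` is a finite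
hypothesis class with correct hypothesis `h*`, `p` a pmf on `ℋ` with `p(h*) > 0`, and
`v h ∈ {−1,+1}` the value of `h` on the queried cell `A`; `s = v h*`. The noisy response
`y` equals `s` with probability `1 − q` and `−s` with probability `q`, where
`q ≤ α ≤ β < 1/2`. `p'(y)` is the Bayes update of `p` with parameter `β` given response
`y`, and `C(p) = (1 − p(h*))/p(h*)`. Then `E_y[C(p')] ≤ C(p)`. -/
theorem stmt6 {H : Type*} [Fintype H] (hstar : H)
    (p : H → ℝ) (hp0 : ∀ h, 0 ≤ p h) (hp1 : ∑ h, p h = 1) (hps : 0 < p hstar)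
    (v : H → ℝ) (hv : ∀ h, v h = 1 ∨ v h = -1)
    (α β q : ℝ) (hq0 : 0 ≤ q) (hqα : q ≤ α) (hαβ : α ≤ β) (hβ0 : 0 < β) (hβ : β < 1 / 2)
    (p' : ℝ → H → ℝ)
    (hp' : ∀ y h, p' y h =
      p h * β ^ ((1 - v h * y) / 2) * (1 - β) ^ ((1 + v h * y) / 2) /
        ∑ h', p h' * β ^ ((1 - v h' * y) / 2) * (1 - β) ^ ((1 + v h' * y) / 2)) :
    (1 - q) * ((1 - p' (v hstar) hstar) / p' (v hstar) hstar) +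
      q * ((1 - p' (-v hstar) hstar) / p' (-v hstar) hstar) ≤
      (1 - p hstar) / p hstar :=
  stmt6_general hstar p hp0 hp1 hps v hv α β q hqα hαβ hβ0 hβ p' hp'
end

section
/- Let 𝒜 be a finite nonempty set and ℋ a finite set of functions from 𝒜 to {−1,+1}, and suppose (𝒜, ℋ) is k-neighborly with coherence parameter c* = c*(𝒜,ℋ). Then for every probability mass function p on ℋ, either there exists a cell A ∈ 𝒜 such that |W(p,A)| ≤ c*, or there exists a pair of k-neighbor cells A, A' ∈ 𝒜 such that W(p,A) > c* and W(p,A') < −c*, where W(p,A) := Σ_{h∈ℋ} p(h)·h(A). -/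
/-!
Averaging the weighted prediction `W(p, ·)` against any distribution `P` on the cells gives
`Σ_h p(h) Σ_A h(A) P(A)`, a convex combination of the correlations that define `c*`. Hence
`min_A W(p, A) ≤ c*` and `-c* ≤ max_A W(p, A)`. If no cell has `|W(p, A)| ≤ c*`, every cell lies
strictly above `c*` or strictly below `-c*`, both sides are occupied, and a chain of
`k`-neighbor steps joining the two sides must cross from one to the other in a single step.
-/

open scoped Classical

open Finset

theorem Relation.ReflTransGen.exists_rel_of_not {α : Type*} {r : α → α → Prop} {P : α → Prop}
    {a b : α} (h : Relation.ReflTransGen r a b) (ha : P a) (hb : ¬P b) :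
    ∃ x y, r x y ∧ P x ∧ ¬P y := by
  induction h with
  | refl => exact absurd ha hb
  | @tail c _ _ hcb ih =>
    by_cases hc : P c
    · exact ⟨c, _, hcb, hc, hb⟩
    · exact ih hc

namespace Coherence

variable {𝒜 : Type*} [Fintype 𝒜]

def weightedPrediction (ℋ : Finset (𝒜 → ℝ)) (p : (𝒜 → ℝ) → ℝ) (A : 𝒜) : ℝ :=
  ∑ h ∈ ℋ, p h * h A

theorem le_coherenceParam [Nonempty 𝒜] (ℋ : Finset (𝒜 → ℝ)) {x : ℝ}
    (hx : ∀ P : 𝒜 → ℝ, (∀ A, 0 ≤ P A) → ∑ A, P A = 1 → ∀ c : ℝ,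
      (∀ h ∈ ℋ, |∑ A, h A * P A| ≤ c) → x ≤ c) :
    x ≤ coherenceParam ℋ := by
  refine le_csInf ?_ fun c ⟨P, hP0, hP1, hPc⟩ => hx P hP0 hP1 c hPc
  obtain ⟨A₀⟩ := ‹Nonempty 𝒜›
  refine ⟨∑ h ∈ ℋ, |h A₀|, Pi.single A₀ 1, fun A => ?_, by simp, fun h hh => ?_⟩
  · by_cases hA : A = A₀ <;> simp [hA]
  · simpa [Pi.single_apply] using single_le_sum (fun h _ => abs_nonneg (h A₀)) hh

theorem abs_sum_mul_weightedPrediction_le {ℋ : Finset (𝒜 → ℝ)} {p : (𝒜 → ℝ) → ℝ}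
    (hp0 : ∀ h ∈ ℋ, 0 ≤ p h) (hp1 : ∑ h ∈ ℋ, p h = 1) {P : 𝒜 → ℝ} {c : ℝ}
    (hc : ∀ h ∈ ℋ, |∑ A, h A * P A| ≤ c) :
    |∑ A, P A * weightedPrediction ℋ p A| ≤ c := by
  have hswap : ∑ A, P A * weightedPrediction ℋ p A = ∑ h ∈ ℋ, p h * ∑ A, h A * P A := by
    simp only [weightedPrediction, mul_sum]
    rw [sum_comm]
    exact sum_congr rfl fun _ _ => sum_congr rfl fun _ _ => by ring
  calc |∑ A, P A * weightedPrediction ℋ p A|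
      ≤ ∑ h ∈ ℋ, |p h * ∑ A, h A * P A| := hswap ▸ abs_sum_le_sum_abs _ _
    _ ≤ ∑ h ∈ ℋ, p h * c := sum_le_sum fun h hh => by
        rw [abs_mul, abs_of_nonneg (hp0 h hh)]
        exact mul_le_mul_of_nonneg_left (hc h hh) (hp0 h hh)
    _ = c := by rw [← sum_mul, hp1, one_mul]

variable [Nonempty 𝒜] {ℋ : Finset (𝒜 → ℝ)} {p : (𝒜 → ℝ) → ℝ}

theorem exists_weightedPrediction_le_coherenceParam (hp0 : ∀ h ∈ ℋ, 0 ≤ p h)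
    (hp1 : ∑ h ∈ ℋ, p h = 1) : ∃ A, weightedPrediction ℋ p A ≤ coherenceParam ℋ := by
  obtain ⟨A, -, hA⟩ := exists_mem_eq_inf' univ_nonempty (weightedPrediction ℋ p)
  refine ⟨A, hA ▸ le_coherenceParam ℋ fun P hP0 hP1 c hc => ?_⟩
  calc univ.inf' univ_nonempty (weightedPrediction ℋ p)
      ≤ ∑ A, P A * weightedPrediction ℋ p A := by
        simpa [centerMass_eq_of_sum_1 _ _ hP1] using
          inf_le_centerMass (s := univ) (f := weightedPrediction ℋ p) (fun A _ => hP0 A)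
            (by simp [hP1])
    _ ≤ c := (abs_le.1 (abs_sum_mul_weightedPrediction_le hp0 hp1 hc)).2

theorem exists_neg_coherenceParam_le_weightedPrediction (hp0 : ∀ h ∈ ℋ, 0 ≤ p h)
    (hp1 : ∑ h ∈ ℋ, p h = 1) : ∃ A, -coherenceParam ℋ ≤ weightedPrediction ℋ p A := by
  obtain ⟨A, -, hA⟩ := exists_mem_eq_sup' univ_nonempty (weightedPrediction ℋ p)
  refine ⟨A, neg_le.1 (hA ▸ le_coherenceParam ℋ fun P hP0 hP1 c hc => ?_)⟩
  rw [neg_le]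
  calc -c ≤ ∑ A, P A * weightedPrediction ℋ p A :=
        (abs_le.1 (abs_sum_mul_weightedPrediction_le hp0 hp1 hc)).1
    _ ≤ univ.sup' univ_nonempty (weightedPrediction ℋ p) := by
        simpa [centerMass_eq_of_sum_1 _ _ hP1] using
          centerMass_le_sup (s := univ) (f := weightedPrediction ℋ p) (fun A _ => hP0 A)
            (by simp [hP1])

end Coherence

open Coherence in
theorem stmt8_general {𝒜 : Type*} [Fintype 𝒜] [Nonempty 𝒜] (ℋ : Finset (𝒜 → ℝ))
    (k : ℕ) (hnbly : kNeighborly ℋ k)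
    (p : (𝒜 → ℝ) → ℝ) (hp0 : ∀ h ∈ ℋ, 0 ≤ p h) (hp1 : ∑ h ∈ ℋ, p h = 1) :
    (∃ A : 𝒜, |∑ h ∈ ℋ, p h * h A| ≤ coherenceParam ℋ) ∨
    (∃ A A' : 𝒜, kNeighbor ℋ k A A' ∧
      coherenceParam ℋ < ∑ h ∈ ℋ, p h * h A ∧
      ∑ h ∈ ℋ, p h * h A' < -coherenceParam ℋ) := by
  change (∃ A, |weightedPrediction ℋ p A| ≤ _) ∨
    ∃ A A', _ ∧ _ < weightedPrediction ℋ p A ∧ weightedPrediction ℋ p A' < _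
  refine or_iff_not_imp_left.2 fun hsmall => ?_
  push Not at hsmall
  have hsplit : ∀ A, coherenceParam ℋ < weightedPrediction ℋ p A ∨
      weightedPrediction ℋ p A < -coherenceParam ℋ := fun A =>
    (lt_abs.1 (hsmall A)).imp_right lt_neg.1
  obtain ⟨Ahigh, hmax⟩ := exists_neg_coherenceParam_le_weightedPrediction hp0 hp1
  obtain ⟨Alow, hmin⟩ := exists_weightedPrediction_le_coherenceParam hp0 hp1
  have hplus : coherenceParam ℋ < weightedPrediction ℋ p Ahigh :=
    (hsplit Ahigh).resolve_right hmax.not_gt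
  obtain ⟨A, A', hAA', hA, hA'⟩ := (hnbly Ahigh Alow).exists_rel_of_not
    (P := fun A => coherenceParam ℋ < weightedPrediction ℋ p A) hplus hmin.not_gt
  exact ⟨A, A', hAA', hA, (hsplit A').resolve_left hA'⟩

/-- Lemma 2: if `(𝒜,ℋ)` is `k`-neighborly with coherence parameter `c*`,
then for every probability mass function `p` on `ℋ` either some cell `A` has
`|W(p,A)| ≤ c*`, or there are `k`-neighbor cells `A, A'` with `W(p,A) > c*` and
`W(p,A') < −c*`, where `W(p,A) = Σ_{h∈ℋ} p(h)·h(A)`. -/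
theorem stmt8 {𝒜 : Type*} [Fintype 𝒜] [Nonempty 𝒜] (ℋ : Finset (𝒜 → ℝ))
    (hpm : ∀ h ∈ ℋ, ∀ A, h A = 1 ∨ h A = -1)
    (k : ℕ) (hnbly : kNeighborly ℋ k)
    (p : (𝒜 → ℝ) → ℝ) (hp0 : ∀ h ∈ ℋ, 0 ≤ p h) (hp1 : ∑ h ∈ ℋ, p h = 1) :
    (∃ A : 𝒜, |∑ h ∈ ℋ, p h * h A| ≤ coherenceParam ℋ) ∨
    (∃ A A' : 𝒜, kNeighbor ℋ k A A' ∧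
      coherenceParam ℋ < ∑ h ∈ ℋ, p h * h A ∧
      ∑ h ∈ ℋ, p h * h A' < -coherenceParam ℋ) :=
  stmt8_general ℋ k hnbly p hp0 hp1
end

section
/- Let (X, Σ, P_X) be a probability space, y : X → {−1,+1} measurable (the true labels), and h₁, h₂ : X → {−1,+1} measurable with risks R(h_j) = P_X({x : h_j(x) ≠ y(x)}). Let Δ = {x : h₁(x) ≠ h₂(x)}, assume P_X(Δ) > 0, and let Q be the restriction of P_X to Δ normalized to a probability measure, with R_Δ(h_j) = Q({x ∈ Δ : h_j(x) ≠ y(x)}). Draw m ≥ 1 points independently from Q and let ĥ be an empirical-error minimizer among {h₁, h₂} on these points (the strictly worse hypothesis is selected only if its empirical error is at most the other's). Then E[R(ĥ)] ≤ min{R(h₁), R(h₂)} + |R(h₁) − R(h₂)|·exp(−m·(R_Δ(h₁) − R_Δ(h₂))²/2) ≤ min{R(h₁), R(h₂)} + 1/√m. -/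
/-! Off `Δ = {h₁ ≠ h₂}` the two hypotheses err at the same points, so
`R(h₁) - R(h₂) = P_X(Δ) (R_Δ(h₁) - R_Δ(h₂))`: the two gaps have the same sign and
`|R(h₁) - R(h₂)| ≤ |R_Δ(h₁) - R_Δ(h₂)|`. The empirical minimiser costs more than the better
hypothesis only when the worse one has no more empirical errors, i.e. when a sum of `m` i.i.d.
`[-1, 1]`-valued variables of mean `-|R_Δ(h₁) - R_Δ(h₂)|` is nonnegative; Hoeffding's inequality
bounds the probability of that event by `exp(-m (R_Δ(h₁) - R_Δ(h₂))² / 2)`. Finally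
`u e^{-m u² / 2} ≤ 1 / √m` because `√m u ≤ 1 + m u² / 2 ≤ e^{m u² / 2}`. -/

open MeasureTheory ProbabilityTheory
open scoped Classical

lemma integral_le_add_mul_measureReal {Ω : Type*} [MeasurableSpace Ω] (μ : Measure Ω)
    [IsProbabilityMeasure μ] {f : Ω → ℝ} (hf_nonneg : 0 ≤ f) {A : Set Ω} (hA : MeasurableSet A)
    {b c : ℝ} (hf : ∀ ω, f ω ≤ b + A.indicator (fun _ => c) ω) :
    ∫ ω, f ω ∂μ ≤ b + c * μ.real A := by
  -- `f` need not be integrable: `integral_mono_of_nonneg` covers the junk value `∫ f = 0`.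
  have hint : Integrable (fun ω => b + A.indicator (fun _ => c) ω) μ :=
    (integrable_const b).add ((integrable_const c).indicator hA)
  calc ∫ ω, f ω ∂μ ≤ ∫ ω, (b + A.indicator (fun _ => c) ω) ∂μ :=
        integral_mono_of_nonneg (ae_of_all _ hf_nonneg) hint (ae_of_all _ hf)
    _ = b + c * μ.real A := by
        rw [integral_add (integrable_const b) ((integrable_const c).indicator hA),
          integral_indicator_const _ hA]
        simp [mul_comm]

lemma measureReal_sub_eq_mul_cond {Ω : Type*} [MeasurableSpace Ω] (μ : Measure Ω)
    [IsFiniteMeasure μ] {D E F : Set Ω} (hD : MeasurableSet D) (hEF : E \ D = F \ D) :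
    μ.real E - μ.real F = μ.real D * ((μ[|D]).real E - (μ[|D]).real F) := by
  have hcond (S : Set Ω) : (μ[|D]).real S * μ.real D = μ.real (S ∩ D) := by
    simp only [Measure.real, ← ENNReal.toReal_mul, cond_mul_eq_inter hD, Set.inter_comm]
  rw [← measureReal_inter_add_sdiff (s := E) hD, ← measureReal_inter_add_sdiff (s := F) hD, hEF,
    ← hcond, ← hcond]
  ring

lemma abs_mul_exp_neg_mul_sq_div_two_le {t : ℝ} (ht : 0 < t) (u : ℝ) :
    |u| * Real.exp (-t * u ^ 2 / 2) ≤ 1 / Real.sqrt t := by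
  set s := Real.sqrt t * |u|
  have hsqrt : 0 < Real.sqrt t := Real.sqrt_pos.mpr ht
  have hs_sq : -t * u ^ 2 / 2 = -(s ^ 2 / 2) := by
    rw [mul_pow, Real.sq_sqrt ht.le, sq_abs]; ring
  have hs_le : s ≤ Real.exp (s ^ 2 / 2) := by
    nlinarith [Real.add_one_le_exp (s ^ 2 / 2), sq_nonneg (s - 1)]
  rw [hs_sq, Real.exp_neg, le_div_iff₀ hsqrt]
  calc |u| * (Real.exp (s ^ 2 / 2))⁻¹ * Real.sqrt t = s / Real.exp (s ^ 2 / 2) := by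
        rw [div_eq_mul_inv]; ring
    _ ≤ 1 := div_le_one_of_le₀ hs_le (Real.exp_pos _).le

section

variable {X : Type*}

noncomputable def errorIndicator (h y : X → ℝ) (x : X) : ℝ := if h x ≠ y x then 1 else 0

lemma errorIndicator_eq_indicator (h y : X → ℝ) :
    errorIndicator h y = {x | h x ≠ y x}.indicator 1 := by
  ext x
  simp [errorIndicator, Set.indicator_apply]

variable [MeasurableSpace X]

lemma measurableSet_ne_fun {f g : X → ℝ} (hf : Measurable f) (hg : Measurable g) :
    MeasurableSet {x | f x ≠ g x} :=
  (measurableSet_eq_fun hf hg).compl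

lemma measurable_errorIndicator {h y : X → ℝ} (hh : Measurable h) (hy : Measurable y) :
    Measurable (errorIndicator h y) := by
  rw [errorIndicator_eq_indicator]
  exact measurable_one.indicator (measurableSet_ne_fun hh hy)

lemma integrable_errorIndicator (Q : Measure X) [IsFiniteMeasure Q] {h y : X → ℝ}
    (hh : Measurable h) (hy : Measurable y) : Integrable (errorIndicator h y) Q := by
  rw [errorIndicator_eq_indicator]
  exact (integrable_const 1).indicator (measurableSet_ne_fun hh hy)

lemma integral_errorIndicator (Q : Measure X) {h y : X → ℝ} (hh : Measurable h)
    (hy : Measurable y) : ∫ x, errorIndicator h y x ∂Q = Q.real {x | h x ≠ y x} := by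
  rw [errorIndicator_eq_indicator, integral_indicator_one (measurableSet_ne_fun hh hy)]

lemma measureReal_pi_sum_nonneg_le_exp {ι : Type*} [Fintype ι] (Q : Measure X)
    [IsProbabilityMeasure Q] {g : X → ℝ} (hg : Measurable g) (hg_mem : ∀ x, g x ∈ Set.Icc (-1) 1)
    (hmean : ∫ x, g x ∂Q ≤ 0) :
    (Measure.pi fun _ : ι => Q).real {ω | 0 ≤ ∑ i, g (ω i)} ≤
      Real.exp (-Fintype.card ι * (∫ x, g x ∂Q) ^ 2 / 2) := by
  set a := ∫ x, g x ∂Q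
  set n : ℝ := (Fintype.card ι : ℝ)
  have hsubG : HasSubgaussianMGF (fun x => g x - a) 1 Q := by
    convert hasSubgaussianMGF_of_mem_Icc (μ := Q) hg.aemeasurable (ae_of_all _ hg_mem)
    ext; norm_num
  have hsubG_pi (i : ι) :
      HasSubgaussianMGF (fun ω : ι → X => g (ω i) - a) 1 (Measure.pi fun _ => Q) := by
    refine HasSubgaussianMGF.of_map (X := fun x => g x - a) (Y := fun ω : ι → X => ω i)
      (measurable_pi_apply i).aemeasurable ?_
    rwa [(measurePreserving_eval (fun _ => Q) i).map_eq]
  have hindep : iIndepFun (fun i (ω : ι → X) => g (ω i) - a) (Measure.pi fun _ => Q) :=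
    iIndepFun_pi (X := fun _ x => g x - a) fun _ => (hg.sub_const a).aemeasurable
  have hoeffding := HasSubgaussianMGF.measure_sum_ge_le_of_iIndepFun hindep (s := Finset.univ)
    (fun i _ => hsubG_pi i) (ε := -(n * a))
    (neg_nonneg.mpr (mul_nonpos_of_nonneg_of_nonpos (by positivity) hmean))
  have hset : {ω : ι → X | 0 ≤ ∑ i, g (ω i)} = {ω | -(n * a) ≤ ∑ i, (g (ω i) - a)} := by
    ext ω
    simp [Finset.sum_sub_distrib, n]
  rw [hset]
  have hsum : ((∑ _i : ι, (1 : NNReal) : NNReal) : ℝ) = n := by simp [n]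
  refine hoeffding.trans_eq (congrArg Real.exp ?_)
  rw [hsum]
  rcases eq_or_ne n 0 with hn | hn
  · simp [hn]
  · field_simp

variable {ι : Type*} [Fintype ι] {y h h₁ h₂ : X → ℝ}

lemma measurable_sum_errorIndicator (hh : Measurable h) (hy : Measurable y) :
    Measurable fun ω : ι → X => ∑ i, errorIndicator h y (ω i) :=
  Finset.measurable_sum _ fun i _ => (measurable_errorIndicator hh hy).comp (measurable_pi_apply i)

lemma measureReal_pi_sum_errorIndicator_le_le_exp (Q : Measure X) [IsProbabilityMeasure Q]
    (hy : Measurable y) (h₁m : Measurable h₁) (h₂m : Measurable h₂)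
    (hQ : Q.real {x | h₂ x ≠ y x} ≤ Q.real {x | h₁ x ≠ y x}) :
    (Measure.pi fun _ : ι => Q).real
        {ω | ∑ i, errorIndicator h₁ y (ω i) ≤ ∑ i, errorIndicator h₂ y (ω i)} ≤
      Real.exp (-Fintype.card ι * (Q.real {x | h₁ x ≠ y x} - Q.real {x | h₂ x ≠ y x}) ^ 2 / 2) := by
  set g := fun x => errorIndicator h₂ y x - errorIndicator h₁ y x
  have hg_mem (x : X) : g x ∈ Set.Icc (-1) 1 := by
    simp only [g, errorIndicator]
    split_ifs <;> norm_num
  have hmean : ∫ x, g x ∂Q = Q.real {x | h₂ x ≠ y x} - Q.real {x | h₁ x ≠ y x} := by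
    rw [integral_sub (integrable_errorIndicator Q h₂m hy) (integrable_errorIndicator Q h₁m hy),
      integral_errorIndicator Q h₂m hy, integral_errorIndicator Q h₁m hy]
  have hoeffding := measureReal_pi_sum_nonneg_le_exp (ι := ι) Q (g := g)
    ((measurable_errorIndicator h₂m hy).sub (measurable_errorIndicator h₁m hy)) hg_mem
    (by rw [hmean]; linarith)
  rw [hmean, sub_sq_comm] at hoeffding
  simpa only [g, Finset.sum_sub_distrib, sub_nonneg] using hoeffding

lemma integral_measureReal_ne_le_min_add (P Q : Measure X) [IsProbabilityMeasure Q]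
    (hy : Measurable y) (h₁m : Measurable h₁) (h₂m : Measurable h₂) (hhat : (ι → X) → X → ℝ)
    (hsel : ∀ ω, hhat ω = h₂ ∨
      (hhat ω = h₁ ∧ ∑ i, errorIndicator h₁ y (ω i) ≤ ∑ i, errorIndicator h₂ y (ω i)))
    (hQ : Q.real {x | h₂ x ≠ y x} ≤ Q.real {x | h₁ x ≠ y x})
    (hP : P.real {x | h₂ x ≠ y x} ≤ P.real {x | h₁ x ≠ y x}) :
    ∫ ω, P.real {x | hhat ω x ≠ y x} ∂(Measure.pi fun _ : ι => Q) ≤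
      min (P.real {x | h₁ x ≠ y x}) (P.real {x | h₂ x ≠ y x}) +
        |P.real {x | h₁ x ≠ y x} - P.real {x | h₂ x ≠ y x}| *
          Real.exp (-Fintype.card ι *
            (Q.real {x | h₁ x ≠ y x} - Q.real {x | h₂ x ≠ y x}) ^ 2 / 2) := by
  set R₁ := P.real {x | h₁ x ≠ y x}
  set R₂ := P.real {x | h₂ x ≠ y x}
  set A := {ω : ι → X | ∑ i, errorIndicator h₁ y (ω i) ≤ ∑ i, errorIndicator h₂ y (ω i)}
  have hpointwise (ω : ι → X) :
      P.real {x | hhat ω x ≠ y x} ≤ R₂ + A.indicator (fun _ => R₁ - R₂) ω := by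
    rcases hsel ω with hω | ⟨hω, hωA⟩
    · rw [hω]
      linarith [Set.indicator_nonneg (fun _ _ => sub_nonneg.mpr hP) ω (s := A)]
    · rw [hω, Set.indicator_of_mem (show ω ∈ A from hωA)]
      linarith
  rw [min_eq_right hP, abs_of_nonneg (sub_nonneg.mpr hP)]
  calc _ ≤ R₂ + (R₁ - R₂) * (Measure.pi fun _ : ι => Q).real A :=
        integral_le_add_mul_measureReal _ (fun ω => measureReal_nonneg)
          (measurableSet_le (measurable_sum_errorIndicator h₁m hy)
            (measurable_sum_errorIndicator h₂m hy)) hpointwise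
    _ ≤ _ := by
        gcongr
        exact measureReal_pi_sum_errorIndicator_le_le_exp Q hy h₁m h₂m hQ

end

theorem stmt15_general {X : Type*} [MeasurableSpace X] (PX : Measure X) [IsProbabilityMeasure PX]
    (y h₁ h₂ : X → ℝ) (hym : Measurable y) (h₁m : Measurable h₁) (h₂m : Measurable h₂)
    (Q : Measure X) [IsProbabilityMeasure Q]
    (hQ : Q = (PX {x | h₁ x ≠ h₂ x})⁻¹ • PX.restrict {x | h₁ x ≠ h₂ x})
    (m : ℕ) (hm : 1 ≤ m)
    (hhat : (Fin m → X) → X → ℝ)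
    (hsel : ∀ ω : Fin m → X,
      (hhat ω = h₁ ∧
        ∑ i, (if h₁ (ω i) ≠ y (ω i) then (1 : ℝ) else 0) ≤
        ∑ i, (if h₂ (ω i) ≠ y (ω i) then (1 : ℝ) else 0)) ∨
      (hhat ω = h₂ ∧
        ∑ i, (if h₂ (ω i) ≠ y (ω i) then (1 : ℝ) else 0) ≤
        ∑ i, (if h₁ (ω i) ≠ y (ω i) then (1 : ℝ) else 0))) :
    (∫ ω, (PX {x | hhat ω x ≠ y x}).toReal ∂(Measure.pi fun _ : Fin m => Q)) ≤
      min (PX {x | h₁ x ≠ y x}).toReal (PX {x | h₂ x ≠ y x}).toReal +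
        |(PX {x | h₁ x ≠ y x}).toReal - (PX {x | h₂ x ≠ y x}).toReal| *
          Real.exp (-(m : ℝ) *
            ((Q {x | h₁ x ≠ y x}).toReal - (Q {x | h₂ x ≠ y x}).toReal) ^ 2 / 2) ∧
    min (PX {x | h₁ x ≠ y x}).toReal (PX {x | h₂ x ≠ y x}).toReal +
        |(PX {x | h₁ x ≠ y x}).toReal - (PX {x | h₂ x ≠ y x}).toReal| *
          Real.exp (-(m : ℝ) *
            ((Q {x | h₁ x ≠ y x}).toReal - (Q {x | h₂ x ≠ y x}).toReal) ^ 2 / 2) ≤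
      min (PX {x | h₁ x ≠ y x}).toReal (PX {x | h₂ x ≠ y x}).toReal +
        1 / Real.sqrt m := by
  simp only [← measureReal_def]
  have hgap : PX.real {x | h₁ x ≠ y x} - PX.real {x | h₂ x ≠ y x} = PX.real {x | h₁ x ≠ h₂ x} *
      (Q.real {x | h₁ x ≠ y x} - Q.real {x | h₂ x ≠ y x}) := by
    rw [hQ]
    refine measureReal_sub_eq_mul_cond PX (measurableSet_ne_fun h₁m h₂m) ?_
    ext x
    simp +contextual
  set R₁ := PX.real {x | h₁ x ≠ y x}
  set R₂ := PX.real {x | h₂ x ≠ y x}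
  set q₁ := Q.real {x | h₁ x ≠ y x}
  set q₂ := Q.real {x | h₂ x ≠ y x}
  set Δ := {x | h₁ x ≠ h₂ x}
  have hΔ_nonneg : 0 ≤ PX.real Δ := measureReal_nonneg
  have hΔ_le_one : PX.real Δ ≤ 1 := measureReal_le_one
  refine ⟨?_, ?_⟩
  · rcases le_total q₂ q₁ with hq | hq
    · have hR : R₂ ≤ R₁ := by nlinarith
      simpa only [Fintype.card_fin] using integral_measureReal_ne_le_min_add PX Q hym h₁m h₂m
        hhat (fun ω => (hsel ω).symm.imp_left And.left) hq hR
    · have hR : R₁ ≤ R₂ := by nlinarith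
      have := integral_measureReal_ne_le_min_add PX Q hym h₂m h₁m
        hhat (fun ω => (hsel ω).imp_left And.left) hq hR
      rwa [min_comm, abs_sub_comm, sub_sq_comm, Fintype.card_fin] at this
  · have hR_le_q : |R₁ - R₂| ≤ |q₁ - q₂| := by
      rw [hgap, abs_mul, abs_of_nonneg hΔ_nonneg]
      exact mul_le_of_le_one_left (abs_nonneg _) hΔ_le_one
    grw [hR_le_q]
    gcongr
    exact abs_mul_exp_neg_mul_sq_div_two_le (Nat.cast_pos.mpr hm) _

/-- expected-risk bound for the verification step of agnostic GBS.
`h₁, h₂ : X → {−1,+1}` have risks `R(h_j) = P_X(h_j ≠ y)`, `Δ = {h₁ ≠ h₂}` has positive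
measure, `Q` is the normalized restriction of `P_X` to `Δ`, and
`R_Δ(h_j) = Q(h_j ≠ y)`. If `ĥ` is an empirical-error minimizer among `{h₁, h₂}` on `m`
i.i.d. draws from `Q`, then
`E[R(ĥ)] ≤ min{R(h₁),R(h₂)} + |R(h₁) − R(h₂)|·exp(−m(R_Δ(h₁) − R_Δ(h₂))²/2)
         ≤ min{R(h₁),R(h₂)} + 1/√m`. -/
theorem stmt15 {X : Type*} [MeasurableSpace X] (PX : Measure X) [IsProbabilityMeasure PX]
    (y h₁ h₂ : X → ℝ) (hym : Measurable y) (h₁m : Measurable h₁) (h₂m : Measurable h₂)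
    (hyv : ∀ x, y x = 1 ∨ y x = -1) (h₁v : ∀ x, h₁ x = 1 ∨ h₁ x = -1)
    (h₂v : ∀ x, h₂ x = 1 ∨ h₂ x = -1)
    (hΔpos : PX {x | h₁ x ≠ h₂ x} ≠ 0)
    (Q : Measure X) [IsProbabilityMeasure Q]
    (hQ : Q = (PX {x | h₁ x ≠ h₂ x})⁻¹ • PX.restrict {x | h₁ x ≠ h₂ x})
    (m : ℕ) (hm : 1 ≤ m)
    (hhat : (Fin m → X) → X → ℝ)
    (hsel : ∀ ω : Fin m → X,
      (hhat ω = h₁ ∧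
        ∑ i, (if h₁ (ω i) ≠ y (ω i) then (1 : ℝ) else 0) ≤
        ∑ i, (if h₂ (ω i) ≠ y (ω i) then (1 : ℝ) else 0)) ∨
      (hhat ω = h₂ ∧
        ∑ i, (if h₂ (ω i) ≠ y (ω i) then (1 : ℝ) else 0) ≤
        ∑ i, (if h₁ (ω i) ≠ y (ω i) then (1 : ℝ) else 0))) :
    (∫ ω, (PX {x | hhat ω x ≠ y x}).toReal ∂(Measure.pi fun _ : Fin m => Q)) ≤
      min (PX {x | h₁ x ≠ y x}).toReal (PX {x | h₂ x ≠ y x}).toReal +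
        |(PX {x | h₁ x ≠ y x}).toReal - (PX {x | h₂ x ≠ y x}).toReal| *
          Real.exp (-(m : ℝ) *
            ((Q {x | h₁ x ≠ y x}).toReal - (Q {x | h₂ x ≠ y x}).toReal) ^ 2 / 2) ∧
    min (PX {x | h₁ x ≠ y x}).toReal (PX {x | h₂ x ≠ y x}).toReal +
        |(PX {x | h₁ x ≠ y x}).toReal - (PX {x | h₂ x ≠ y x}).toReal| *
          Real.exp (-(m : ℝ) *
            ((Q {x | h₁ x ≠ y x}).toReal - (Q {x | h₂ x ≠ y x}).toReal) ^ 2 / 2) ≤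
      min (PX {x | h₁ x ≠ y x}).toReal (PX {x | h₂ x ≠ y x}).toReal +
        1 / Real.sqrt m :=
  stmt15_general PX y h₁ h₂ hym h₁m h₂m Q hQ m hm hhat hsel
end

section
/- Let N ≥ 2 and let I₁, …, I_N be pairwise disjoint nonempty intervals contained in [0,1]. Then the infimum over Borel probability measures P on [0,1] of max_{1≤i≤N} |2P(I_i) − 1| equals 1 − 2/N, and it is attained by the measure placing mass 1/N at one point of each interval. Consequently, for the hypothesis class consisting of the functions h_i(x) = +1 for x ∈ I_i and h_i(x) = −1 otherwise, the coherence parameter equals 1 − 2·N^{−1}. -/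
open MeasureTheory
open scoped ENNReal

/-- coherence parameter of `N` disjoint intervals: for pairwise disjoint
nonempty intervals `I₁, …, I_N ⊆ [0,1]` (`N ≥ 2`), the infimum over Borel probability
measures `P` on `[0,1]` of `max_i |2P(I_i) − 1|` equals `1 − 2/N`, attained by placing
mass `1/N` at one point of each interval. -/
theorem stmt16 (N : ℕ) (hN : 2 ≤ N) (I : Fin N → Set ℝ)
    (hord : ∀ i, (I i).OrdConnected) (hne : ∀ i, (I i).Nonempty)
    (hsub : ∀ i, I i ⊆ Set.Icc (0 : ℝ) 1)
    (hdisj : Pairwise (Function.onFun Disjoint I)) :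
    sInf {c : ℝ | ∃ P : Measure ℝ, IsProbabilityMeasure P ∧ P (Set.Icc (0 : ℝ) 1) = 1 ∧
        c = ⨆ i : Fin N, |2 * (P (I i)).toReal - 1|} = 1 - 2 / N ∧
    ∀ x : Fin N → ℝ, (∀ i, x i ∈ I i) →
      (⨆ i : Fin N,
        |2 * ((((N : ℝ≥0∞)⁻¹ • ∑ i' : Fin N, Measure.dirac (x i')) : Measure ℝ)
            (I i)).toReal - 1|) = 1 - 2 / N := by
  have hNpos : 0 < N := by omega
  have hNR : (0:ℝ) < N := by exact_mod_cast hNpos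
  have hN0 : (N : ℝ≥0∞) ≠ 0 := by exact_mod_cast hNpos.ne'
  have hmeas : ∀ i, MeasurableSet (I i) := fun i => (hord i).measurableSet
  have habs : |2 * (N:ℝ)⁻¹ - 1| = 1 - 2 / N := by
    rw [abs_of_nonpos]
    · rw [div_eq_mul_inv]; ring
    · have : 2 / (N:ℝ) ≤ 1 := by
        rw [div_le_one hNR]; exact_mod_cast hN
      rw [div_eq_mul_inv] at this; linarith
  haveI : Nonempty (Fin N) := ⟨⟨0, hNpos⟩⟩
  -- part 2
  have part2 : ∀ x : Fin N → ℝ, (∀ i, x i ∈ I i) →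
      (⨆ i : Fin N,
        |2 * ((((N : ℝ≥0∞)⁻¹ • ∑ i' : Fin N, Measure.dirac (x i')) : Measure ℝ)
            (I i)).toReal - 1|) = 1 - 2 / N := by
    intro x hx
    have hval : ∀ i, (((N : ℝ≥0∞)⁻¹ • ∑ i' : Fin N, Measure.dirac (x i')) : Measure ℝ) (I i)
        = (N:ℝ≥0∞)⁻¹ := by
      intro i
      rw [Measure.smul_apply, Measure.finset_sum_apply, smul_eq_mul]
      have : ∑ i' : Fin N, Measure.dirac (x i') (I i) = 1 := by
        rw [Finset.sum_eq_single i]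
        · rw [Measure.dirac_apply' _ (hmeas i), Set.indicator_of_mem (hx i)]; rfl
        · intro j _ hj
          rw [Measure.dirac_apply' _ (hmeas i), Set.indicator_of_notMem]
          exact fun h => (hdisj hj).le_bot ⟨hx j, h⟩
        · intro h; exact absurd (Finset.mem_univ i) h
      rw [this, mul_one]
    have : ∀ i, |2 * ((((N : ℝ≥0∞)⁻¹ • ∑ i' : Fin N, Measure.dirac (x i')) : Measure ℝ)
        (I i)).toReal - 1| = 1 - 2 / N := by
      intro i
      rw [hval i, ENNReal.toReal_inv]
      simp only [ENNReal.toReal_natCast]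
      exact habs
    simp only [this]
    exact ciSup_const
  refine ⟨?_, part2⟩
  -- lower bound: every element of the set is ≥ 1 - 2/N
  have hlb : ∀ c ∈ {c : ℝ | ∃ P : Measure ℝ, IsProbabilityMeasure P ∧
      P (Set.Icc (0 : ℝ) 1) = 1 ∧ c = ⨆ i : Fin N, |2 * (P (I i)).toReal - 1|},
      1 - 2 / N ≤ c := by
    rintro c ⟨P, hP, hP1, rfl⟩
    have hsum : ∑ i, (P (I i)).toReal ≤ 1 := by
      have h1 : ∑ i, P (I i) ≤ 1 := by
        have := measure_iUnion (μ := P) hdisj hmeas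
        rw [tsum_fintype] at this
        rw [← this]
        exact prob_le_one
      calc ∑ i, (P (I i)).toReal = (∑ i, P (I i)).toReal := by
            rw [ENNReal.toReal_sum (fun i _ => measure_ne_top P _)]
        _ ≤ (1:ℝ≥0∞).toReal := ENNReal.toReal_mono ENNReal.one_ne_top h1
        _ = 1 := ENNReal.toReal_one
    obtain ⟨i, hi⟩ : ∃ i, (P (I i)).toReal ≤ 1 / N := by
      by_contra h
      push_neg at h
      have : (1:ℝ) < ∑ i, (P (I i)).toReal := by
        calc (1:ℝ) = ∑ _i : Fin N, 1/(N:ℝ) := by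
              rw [Finset.sum_const, Finset.card_univ, Fintype.card_fin, nsmul_eq_mul]
              field_simp
          _ < ∑ i, (P (I i)).toReal :=
              Finset.sum_lt_sum_of_nonempty Finset.univ_nonempty (fun i _ => h i)
      linarith
    have hterm : 1 - 2 / N ≤ |2 * (P (I i)).toReal - 1| := by
      have := neg_abs_le (2 * (P (I i)).toReal - 1)
      have h2 : 2 * (P (I i)).toReal ≤ 2 / N := by
        rw [div_eq_mul_one_div]; linarith
      linarith
    exact hterm.trans (le_ciSup (f := fun i => |2 * (P (I i)).toReal - 1|)
      (Set.Finite.bddAbove (Set.finite_range _)) i)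
  -- membership: the explicit measure attains 1 - 2/N
  set x₀ : Fin N → ℝ := fun i => (hne i).choose with hx₀def
  have hx₀ : ∀ i, x₀ i ∈ I i := fun i => (hne i).choose_spec
  set P₀ : Measure ℝ := (N : ℝ≥0∞)⁻¹ • ∑ i' : Fin N, Measure.dirac (x₀ i') with hP₀def
  have hdiracsum : ∀ s : Set ℝ, MeasurableSet s → (∀ i, x₀ i ∈ s) → P₀ s = 1 := by
    intro s hs hmem
    rw [hP₀def, Measure.smul_apply, Measure.finset_sum_apply, smul_eq_mul]
    have : ∑ i' : Fin N, Measure.dirac (x₀ i') s = N := by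
      have : ∀ i' : Fin N, Measure.dirac (x₀ i') s = 1 := fun i' => by
        rw [Measure.dirac_apply' _ hs, Set.indicator_of_mem (hmem i')]; rfl
      simp [this]
    rw [this, ENNReal.inv_mul_cancel hN0 (ENNReal.natCast_ne_top N)]
  have hprob : IsProbabilityMeasure P₀ :=
    ⟨hdiracsum Set.univ MeasurableSet.univ (fun i => Set.mem_univ _)⟩
  have hicc : P₀ (Set.Icc (0:ℝ) 1) = 1 :=
    hdiracsum _ measurableSet_Icc (fun i => hsub i (hx₀ i))
  have hmem : (1 - 2 / (N:ℝ)) ∈ {c : ℝ | ∃ P : Measure ℝ, IsProbabilityMeasure P ∧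
      P (Set.Icc (0 : ℝ) 1) = 1 ∧ c = ⨆ i : Fin N, |2 * (P (I i)).toReal - 1|} :=
    ⟨P₀, hprob, hicc, (part2 x₀ hx₀).symm⟩
  exact le_antisymm (csInf_le ⟨1 - 2/N, hlb⟩ hmem) (le_csInf ⟨_, hmem⟩ hlb)
end

section
/- Let 𝒜 be a finite nonempty set and ℋ a finite set of N ≥ 1 functions from 𝒜 to {−1,+1}, each of which takes both values +1 and −1 somewhere on 𝒜. Then there exists a probability mass function P on 𝒜 such that max_{h∈ℋ} |Σ_{A∈𝒜} h(A) P(A)| ≤ 1 − N^{−1}; that is, the coherence parameter of (𝒜, ℋ) is at most 1 − N^{−1}. -/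
open Finset

/-! Each hypothesis `h ∈ ℋ` contributes one cell where `h = 1` and one where `h = -1`, each with
mass `1/(2N)`. Against `h` itself its own pair cancels, and every other pair contributes at most
`2/(2N)` in absolute value, so the correlation with `h` is at most `2(N-1)/(2N) = 1 - N⁻¹`. -/

open Classical in
noncomputable def pushforwardUniform {ι α : Type*} [Fintype ι] (x : ι → α) (A : α) : ℝ :=
  (∑ i, if x i = A then 1 else 0) / Fintype.card ι

section PushforwardUniform

variable {ι α : Type*} [Fintype ι] (x : ι → α)

theorem pushforwardUniform_nonneg (A : α) : 0 ≤ pushforwardUniform x A := by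
  unfold pushforwardUniform
  positivity

theorem sum_mul_pushforwardUniform [Fintype α] (f : α → ℝ) :
    ∑ A, f A * pushforwardUniform x A = (∑ i, f (x i)) / Fintype.card ι := by
  classical
  simp only [pushforwardUniform, ← mul_div_assoc, ← Finset.sum_div, Finset.mul_sum]
  rw [Finset.sum_comm]
  simp

theorem sum_pushforwardUniform [Fintype α] [Nonempty ι] : ∑ A, pushforwardUniform x A = 1 := by
  simpa [Fintype.card_ne_zero] using sum_mul_pushforwardUniform x (fun _ => 1)

end PushforwardUniform

theorem abs_sum_le_of_apply_eq_zero {ι : Type*} [Fintype ι] [DecidableEq ι] {t : ι → ℝ} {c : ℝ}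
    (i₀ : ι) (h₀ : t i₀ = 0) (ht : ∀ i, |t i| ≤ c) :
    |∑ i, t i| ≤ c * (Fintype.card ι - 1) := by
  rw [← Finset.sum_erase _ h₀]
  calc |∑ i ∈ univ.erase i₀, t i|
      ≤ ∑ i ∈ univ.erase i₀, |t i| := abs_sum_le_sum_abs _ _
    _ ≤ (univ.erase i₀).card • c := sum_le_card_nsmul _ _ _ fun i _ => ht i
    _ = c * (Fintype.card ι - 1) := by
      rw [card_erase_of_mem (mem_univ _), card_univ, nsmul_eq_mul,
        Nat.cast_pred (Fintype.card_pos_iff.2 ⟨i₀⟩), mul_comm]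

theorem stmt19_general {𝒜 : Type*} [Fintype 𝒜] (ℋ : Finset (𝒜 → ℝ))
    (hpm : ∀ h ∈ ℋ, ∀ A, h A = 1 ∨ h A = -1)
    (hboth : ∀ h ∈ ℋ, (∃ A, h A = 1) ∧ ∃ A, h A = -1)
    (N : ℕ) (hN : ℋ.card = N) (hN1 : 1 ≤ N) :
    ∃ P : 𝒜 → ℝ, (∀ A, 0 ≤ P A) ∧ (∑ A, P A) = 1 ∧
      ∀ h ∈ ℋ, |∑ A, h A * P A| ≤ 1 - (N : ℝ)⁻¹ := by
  classical
  choose a ha using fun h hh => (hboth h hh).1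
  choose b hb using fun h hh => (hboth h hh).2
  let x : ℋ × Bool → 𝒜 := fun p => cond p.2 (a _ p.1.2) (b _ p.1.2)
  have : Nonempty ℋ := (Finset.card_pos.1 (hN ▸ hN1)).coe_sort
  refine ⟨pushforwardUniform x, pushforwardUniform_nonneg x, sum_pushforwardUniform x,
    fun h hh => ?_⟩
  have habs : ∀ A, |h A| ≤ 1 := fun A => by rcases hpm h hh A with e | e <;> simp [e]
  have hsum : |∑ g : ℋ, (h (a _ g.2) + h (b _ g.2))| ≤ 2 * (N - 1) := by
    have := abs_sum_le_of_apply_eq_zero (t := fun g : ℋ => h (a _ g.2) + h (b _ g.2)) (c := 2)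
      ⟨h, hh⟩ (by simp [ha h hh, hb h hh]) fun g =>
        (abs_add_le _ _).trans (by linarith [habs (a _ g.2), habs (b _ g.2)])
    rwa [Fintype.card_coe, hN] at this
  have hNpos : (0 : ℝ) < N := by exact_mod_cast hN1
  rw [sum_mul_pushforwardUniform, Fintype.sum_prod_type, Fintype.card_prod, Fintype.card_coe, hN]
  simp only [Fintype.sum_bool, Fintype.card_bool, Nat.cast_mul, Nat.cast_ofNat, abs_div,
    abs_of_pos (by positivity : (0 : ℝ) < N * 2)]
  rw [div_le_iff₀ (by positivity)]
  calc _ ≤ 2 * ((N : ℝ) - 1) := hsum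
    _ = (1 - (N : ℝ)⁻¹) * (N * 2) := by field_simp

/-- trivial coherence bound: if every hypothesis in `ℋ` (a set of `N ≥ 1`
functions `𝒜 → {−1,+1}` on a finite nonempty set `𝒜`) takes both values `+1` and `−1`,
then there is a probability mass function `P` on `𝒜` with
`max_{h∈ℋ} |Σ_A h(A) P(A)| ≤ 1 − N⁻¹`. -/
theorem stmt19 {𝒜 : Type*} [Fintype 𝒜] [Nonempty 𝒜] (ℋ : Finset (𝒜 → ℝ))
    (hpm : ∀ h ∈ ℋ, ∀ A, h A = 1 ∨ h A = -1)
    (hboth : ∀ h ∈ ℋ, (∃ A, h A = 1) ∧ ∃ A, h A = -1)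
    (N : ℕ) (hN : ℋ.card = N) (hN1 : 1 ≤ N) :
    ∃ P : 𝒜 → ℝ, (∀ A, 0 ≤ P A) ∧ (∑ A, P A) = 1 ∧
      ∀ h ∈ ℋ, |∑ A, h A * P A| ≤ 1 - (N : ℝ)⁻¹ :=
  stmt19_general ℋ hpm hboth N hN hN1
end
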